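/- Let φ be a sentence over relational signature τ with ≼ ∉ τ and P ∉ τ a fresh unary predicate, and let ψ := ∃x (P(x) ∧ ∀y (y ≼ x)). If ¬φ has no model with a one-element domain, then φ is valid over all finite τ-structures if and only if the sentence (¬φ) → ψ is order-invariant over finite (τ ∪ {P})-structures. -/

import Mathlib

/-!
If `φ` is valid, `(¬φ) → ψ` is true under every order. Conversely, a countermodel of `φ` has at
least two elements `a ≠ b`; interpreting `P` as `{a}`, the sentence `(¬φ) → ψ` holds under an
order with maximum `a` and fails under one with maximum `b`.
-/

open FirstOrder Language

theorem exists_isLinearOrder_forall_rel_self {α : Type*} (a : α) :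
    ∃ r : α → α → Prop, IsLinearOrder α r ∧ ∀ y, r y a := by
  classical
  let _ : LinearOrder {b // b ≠ a} := IsWellOrder.linearOrder WellOrderingRel
  let e : α ≃ WithTop {b // b ≠ a} := (Equiv.optionSubtypeNe a).symm
  refine ⟨fun y x => e y ≤ e x, ?_, fun y => ?_⟩
  · let _ : LinearOrder α := LinearOrder.lift' e e.injective
    exact inferInstanceAs (IsLinearOrder α (· ≤ ·))
  · exact (le_top : e y ≤ ⊤).trans_eq (Equiv.optionSubtypeNe_symm_self a).symm

theorem exists_isLinearOrder_not_iff_max_eq {α : Type*} {a b : α} (hab : a ≠ b) :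
    ∃ r r' : α → α → Prop, IsLinearOrder α r ∧ IsLinearOrder α r' ∧
      ¬((∃ x, x = a ∧ ∀ y, r y x) ↔ (∃ x, x = a ∧ ∀ y, r' y x)) := by
  obtain ⟨r, hr, hra⟩ := exists_isLinearOrder_forall_rel_self a
  obtain ⟨r', hr', hr'b⟩ := exists_isLinearOrder_forall_rel_self b
  refine ⟨r, r', hr, hr', fun h => ?_⟩
  obtain ⟨_, rfl, hr'a⟩ := h.mp ⟨a, rfl, hra⟩
  exact hab (hr'.antisymm _ _ (hr'b _) (hr'a b))

theorem exists_pair_ne_of_card_ne_one {α : Type*} [Fintype α] [Nonempty α]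
    (h : Fintype.card α ≠ 1) : ∃ a b : α, a ≠ b :=
  have : Nontrivial α :=
    Fintype.one_lt_card_iff_nontrivial.mp (by have := Fintype.card_pos (α := α); omega)
  exists_pair_ne α

theorem validity_iff_order_invariance_general (L : Language)
    (φ : L.Sentence)
    (hone : ∀ (M : Type) (_ : L.Structure M) (_ : Fintype M),
      Nonempty M → Fintype.card M = 1 → M ⊨ φ) :
    (∀ (M : Type) (_ : L.Structure M) (_ : Fintype M), Nonempty M → M ⊨ φ) ↔
    (∀ (M : Type) (_ : L.Structure M) (_ : Fintype M), Nonempty M →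
      ∀ (p : M → Prop) (r r' : M → M → Prop),
        IsLinearOrder M r → IsLinearOrder M r' →
        (((¬ M ⊨ φ) → ∃ x, p x ∧ ∀ y, r y x) ↔
         ((¬ M ⊨ φ) → ∃ x, p x ∧ ∀ y, r' y x))) := by
  refine ⟨fun hvalid M _ _ hne _ _ _ _ _ => by simp [hvalid M _ _ hne], fun hinv M _ _ hne => ?_⟩
  by_contra hφ
  obtain ⟨a, b, hab⟩ := exists_pair_ne_of_card_ne_one fun h => hφ (hone M _ _ hne h)
  obtain ⟨r, r', hr, hr', hne_max⟩ := exists_isLinearOrder_not_iff_max_eq hab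
  have hinv_a := hinv M ‹_› ‹_› hne (· = a) r r' hr hr'
  rw [imp_iff_right hφ, imp_iff_right hφ] at hinv_a
  exact hne_max hinv_a

/-- Correctness of the reduction from finite validity to order-invariance:
for a sentence `φ` over a relational signature `τ` (with `≼, P ∉ τ`), if `¬φ`
has no model with a one-element domain, then `φ` is valid over all finite
`τ`-structures iff the sentence `(¬φ) → ∃x (P(x) ∧ ∀y (y ≼ x))` is
order-invariant over finite `(τ ∪ {P})`-structures (stated semantically:
for all finite structures, interpretations `p` of `P` and linear orders
`r, r'`, the truth values of `(¬φ) → ψ` under `r` and under `r'` agree). -/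
theorem validity_iff_order_invariance (L : Language) [L.IsRelational]
    (φ : L.Sentence)
    (hone : ∀ (M : Type) (_ : L.Structure M) (_ : Fintype M),
      Nonempty M → Fintype.card M = 1 → M ⊨ φ) :
    (∀ (M : Type) (_ : L.Structure M) (_ : Fintype M), Nonempty M → M ⊨ φ) ↔
    (∀ (M : Type) (_ : L.Structure M) (_ : Fintype M), Nonempty M →
      ∀ (p : M → Prop) (r r' : M → M → Prop),
        IsLinearOrder M r → IsLinearOrder M r' →
        (((¬ M ⊨ φ) → ∃ x, p x ∧ ∀ y, r y x) ↔
         ((¬ M ⊨ φ) → ∃ x, p x ∧ ∀ y, r' y x))) :=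
  validity_iff_order_invariance_general L φ hone
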